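/- Let C ⊆ S^{47} be a finite T₂-avoiding spherical 11-design. Then |C| ≥ 52416000, and if |C| = 52416000 then ⟨x,y⟩ ≤ 1/2 for all distinct x,y ∈ C, C is antipodal, and C is distance invariant with distance distribution A_{-1}=1, A_{±1/2}=36848, A_{±1/3}=1678887, A_{±1/6}=12608784, A_0=23766960. -/

import Mathlib

open MeasureTheory Finset
open scoped Classical

/-- The normalized surface measure on the unit sphere of `EuclideanSpace ℝ (Fin n)`. -/
noncomputable def normSphereMeasure (n : ℕ) :
    Measure (Metric.sphere (0 : EuclideanSpace ℝ (Fin n)) 1) :=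
  ((volume : Measure (EuclideanSpace ℝ (Fin n))).toSphere Set.univ)⁻¹ •
    (volume : Measure (EuclideanSpace ℝ (Fin n))).toSphere

/-- `C` is a spherical `τ`-design: every polynomial in `n` variables of total degree at
most `τ` has average over `C` equal to its average over the sphere. -/
def IsSphericalDesign (n τ : ℕ) (C : Finset (EuclideanSpace ℝ (Fin n))) : Prop :=
  ∀ p : MvPolynomial (Fin n) ℝ, p.totalDegree ≤ τ →
    (1 / (C.card : ℝ)) * ∑ x ∈ C, MvPolynomial.eval (fun i => x i) p =
      ∫ x, MvPolynomial.eval (fun i => (x : EuclideanSpace ℝ (Fin n)) i) p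
        ∂(normSphereMeasure n)

/-- The discrete `h`-energy of a code `C`. -/
noncomputable def energy (n : ℕ) (h : ℝ → ℝ) (C : Finset (EuclideanSpace ℝ (Fin n))) : ℝ :=
  (1 / (C.card : ℝ)) *
    ∑ x ∈ C, ∑ y ∈ C, if x ≠ y then h (inner ℝ x y : ℝ) else 0

/-- The avoiding set `T₁ = (-1/3,-1/6) ∪ (1/6,1/3)`. -/
def T1 : Set ℝ := Set.Ioo (-1/3) (-1/6) ∪ Set.Ioo (1/6) (1/3)

/-- The avoiding set `T₂ = (-1/2,-1/3) ∪ (1/3,1/2)`. -/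
def T2 : Set ℝ := Set.Ioo (-1/2) (-1/3) ∪ Set.Ioo (1/3) (1/2)

/-- A code is antipodal if it is closed under negation. -/
def IsAntipodal {n : ℕ} (C : Finset (EuclideanSpace ℝ (Fin n))) : Prop :=
  ∀ x ∈ C, -x ∈ C

/-- The common energy value of the four exceptional codes. -/
noncomputable def Estar (h : ℝ → ℝ) : ℝ :=
  36848 * (h (-1/2) + h (1/2)) + 1678887 * (h (-1/3) + h (1/3)) +
    12608784 * (h (-1/6) + h (1/6)) + 23766960 * h 0 + h (-1)

/-- `C` is distance invariant with the distance distribution of the four exceptional codes. -/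
def HasExceptionalDistanceDistribution (C : Finset (EuclideanSpace ℝ (Fin 48))) : Prop :=
  ∀ x ∈ C,
    ((C.filter fun y => (inner ℝ x y : ℝ) = -1).card = 1) ∧
    ((C.filter fun y => (inner ℝ x y : ℝ) = -1/2).card = 36848) ∧
    ((C.filter fun y => (inner ℝ x y : ℝ) = 1/2).card = 36848) ∧
    ((C.filter fun y => (inner ℝ x y : ℝ) = -1/3).card = 1678887) ∧
    ((C.filter fun y => (inner ℝ x y : ℝ) = 1/3).card = 1678887) ∧
    ((C.filter fun y => (inner ℝ x y : ℝ) = -1/6).card = 12608784) ∧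
    ((C.filter fun y => (inner ℝ x y : ℝ) = 1/6).card = 12608784) ∧
    ((C.filter fun y => (inner ℝ x y : ℝ) = 0).card = 23766960) ∧
    (∀ t : ℝ, t < 1 → t ∉ ({-1, -1/2, 1/2, -1/3, 1/3, -1/6, 1/6, 0} : Set ℝ) →
      (C.filter fun y => (inner ℝ x y : ℝ) = t).card = 0)

/-!
Linear programming bound. The degree-11 polynomial
`f(t) = (t + 1)(t² - 1/4)(t² - 1/9) t² (t² - 1/36)²` is nonnegative on `[-1, 1] \ T₂`. For
`x ∈ C`, the design property turns `∑_{y ∈ C} f⟪x, y⟫` into `|C|` times the average of `f(ω₁)`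
over `S⁴⁷`; the moments of `ω₁`, obtained from Gaussian integrals in polar coordinates, make this
`|C| · 7/291133440`. Dropping the nonnegative terms with `y ≠ x` leaves
`f(1) = 1225/972 ≤ |C| · 7/291133440`, i.e. `|C| ≥ 52416000`.

In the case of equality every `⟪x, y⟫` with `y ≠ x` is a root of `f`, hence lies in
`{-1, ±1/2, ±1/3, ±1/6, 0}`. The numbers of `y` at each of these eight inner products then solve
the Vandermonde system given by the moments of degree `0, …, 7`, whose solution is the stated
distribution; the neighbour at `-1` is `-x`.
-/

open Real Set
open scoped RealInnerProductSpace

local notation "𝔼" n:max => EuclideanSpace ℝ (Fin n)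

lemma integral_Ioi_pow_mul_exp_neg_sq (k : ℕ) :
    ∫ x in Ioi (0 : ℝ), x ^ k * exp (-x ^ 2) = Gamma ((k + 1) / 2) / 2 := by
  have h := integral_rpow_mul_exp_neg_rpow (p := 2) (q := k) two_pos
    (by linarith [(Nat.cast_nonneg k : (0 : ℝ) ≤ k)])
  norm_num [Real.rpow_natCast] at h
  rw [h]
  ring

lemma integral_pow_mul_exp_neg_sq_of_odd {k : ℕ} (hk : Odd k) :
    ∫ x : ℝ, x ^ k * exp (-x ^ 2) = 0 := by
  have h := integral_neg_eq_self (fun x : ℝ => x ^ k * exp (-x ^ 2)) volume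
  simp only [hk.neg_pow, even_two.neg_pow, neg_mul, integral_neg] at h
  linarith

lemma integral_pow_mul_exp_neg_sq_of_even {k : ℕ} (hk : Even k) :
    ∫ x : ℝ, x ^ k * exp (-x ^ 2) = Gamma ((k + 1) / 2) := by
  have hint : Integrable (fun x : ℝ => x ^ k * exp (-x ^ 2)) := by
    simpa [Real.rpow_natCast] using integrable_rpow_mul_exp_neg_mul_sq one_pos (s := k)
      (by linarith [(Nat.cast_nonneg k : (0 : ℝ) ≤ k)])
  rw [← intervalIntegral.integral_Iic_add_Ioi hint.integrableOn hint.integrableOn (b := 0),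
    ← neg_zero, ← integral_comp_neg_Ioi, neg_zero]
  simp only [hk.neg_pow, even_two.neg_pow, integral_Ioi_pow_mul_exp_neg_sq]
  ring

lemma integral_pow_add_two_mul_exp_neg_sq (k : ℕ) :
    ∫ x : ℝ, x ^ (k + 2) * exp (-x ^ 2) = (k + 1) / 2 * ∫ x : ℝ, x ^ k * exp (-x ^ 2) := by
  rcases Nat.even_or_odd k with hk | hk
  · rw [integral_pow_mul_exp_neg_sq_of_even hk,
      integral_pow_mul_exp_neg_sq_of_even (hk.add even_two), ← Gamma_add_one (by positivity)]
    push_cast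
    ring_nf
  · rw [integral_pow_mul_exp_neg_sq_of_odd hk,
      integral_pow_mul_exp_neg_sq_of_odd (hk.add_even even_two), mul_zero]

lemma integral_volumeIoiPow (m : ℕ) (g : ℝ → ℝ) :
    ∫ r, g r ∂Measure.volumeIoiPow m = ∫ r in Ioi (0 : ℝ), r ^ m * g r := by
  rw [Measure.volumeIoiPow, integral_withDensity_eq_integral_toReal_smul
    (measurable_subtype_coe.pow_const _).ennreal_ofReal (by simp),
    integral_subtype_comap measurableSet_Ioi (fun r => (ENNReal.ofReal (r ^ m)).toReal • g r)]
  refine setIntegral_congr_fun measurableSet_Ioi fun r hr => ?_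
  rw [ENNReal.toReal_ofReal (pow_nonneg (le_of_lt hr) _), smul_eq_mul]

section SphereMoments

variable {n : ℕ}

lemma integral_coord_pow_mul_exp_neg_norm_sq (i : Fin n) (k : ℕ) :
    ∫ x : 𝔼 n, x i ^ k * exp (-‖x‖ ^ 2) =
      (∫ t : ℝ, t ^ k * exp (-t ^ 2)) * (∫ t : ℝ, exp (-t ^ 2)) ^ (n - 1) := by
  rw [← (PiLp.volume_preserving_toLp (Fin n)).integral_comp
    (MeasurableEquiv.toLp 2 (Fin n → ℝ)).measurableEmbedding]
  have h_prod : ∀ y : Fin n → ℝ, (WithLp.toLp 2 y) i ^ k * exp (-‖WithLp.toLp 2 y‖ ^ 2) =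
      ∏ j, (if j = i then y j ^ k else 1) * exp (-y j ^ 2) := by
    intro y
    rw [EuclideanSpace.norm_sq_eq, Finset.prod_mul_distrib, Finset.prod_ite_eq',
      ← Real.exp_sum, ← Finset.sum_neg_distrib]
    simp
  simp only [h_prod]
  rw [integral_fintype_prod_volume_eq_prod
      (fun j t => (if j = i then t ^ k else 1) * exp (-t ^ 2)),
    ← Finset.mul_prod_erase _ _ (Finset.mem_univ i),
    Finset.prod_congr rfl (g := fun _ => ∫ t : ℝ, exp (-t ^ 2))
      (fun j hj => by simp only [if_neg (Finset.ne_of_mem_erase hj), one_mul]),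
    Finset.prod_const, Finset.card_erase_of_mem (Finset.mem_univ i)]
  simp

lemma integral_inner_norm_eq_of_norm_eq {v w : 𝔼 n} (h : ‖v‖ = ‖w‖) (f : ℝ → ℝ → ℝ) :
    ∫ x, f ⟪v, x⟫ ‖x‖ = ∫ x, f ⟪w, x⟫ ‖x‖ := by
  set e := (ℝ ∙ (v - w))ᗮ.reflection
  have hev : e v = w := Submodule.reflection_sub h
  conv_rhs => rw [← hev, ← e.measurePreserving.integral_comp e.toHomeomorph.measurableEmbedding]
  simp only [LinearIsometryEquiv.inner_map_map, LinearIsometryEquiv.norm_map]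

lemma integral_inner_pow_mul_exp_neg_norm_sq_eq_toSphere [NeZero n] (v : 𝔼 n) (k : ℕ) :
    ∫ x, ⟪v, x⟫ ^ k * exp (-‖x‖ ^ 2) =
      (∫ ω : Metric.sphere (0 : 𝔼 n) 1, ⟪v, (ω : 𝔼 n)⟫ ^ k ∂(volume : Measure (𝔼 n)).toSphere) *
        (Gamma ((k + n) / 2) / 2) := by
  set f : 𝔼 n → ℝ := fun x => ⟪v, x⟫ ^ k * exp (-‖x‖ ^ 2)
  have hm := (volume : Measure (𝔼 n)).measurePreserving_homeomorphUnitSphereProd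
  rw [finrank_euclideanSpace_fin] at hm
  have h_punct : ∫ x, f x = ∫ x : ({0}ᶜ : Set (𝔼 n)), f x ∂(volume.comap Subtype.val) := by
    rw [integral_subtype_comap (measurableSet_singleton 0).compl f, restrict_compl_singleton]
  have h_sphere_prod : ∫ x : ({0}ᶜ : Set (𝔼 n)), f x ∂(volume.comap Subtype.val) =
      ∫ p : Metric.sphere (0 : 𝔼 n) 1 × Ioi (0 : ℝ), f ((p.2 : ℝ) • (p.1 : 𝔼 n))
        ∂(volume.toSphere.prod (Measure.volumeIoiPow (n - 1))) := by
    rw [← hm.integral_comp (Homeomorph.measurableEmbedding _)]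
    congr 1 with x
    rw [← homeomorphUnitSphereProd_symm_apply_coe, Homeomorph.symm_apply_apply]
  have h_homogeneous : ∀ p : Metric.sphere (0 : 𝔼 n) 1 × Ioi (0 : ℝ),
      f ((p.2 : ℝ) • (p.1 : 𝔼 n)) =
        ⟪v, (p.1 : 𝔼 n)⟫ ^ k * ((p.2 : ℝ) ^ k * exp (-(p.2 : ℝ) ^ 2)) := by
    rintro ⟨ω, r⟩
    simp only [f, inner_smul_right, norm_smul, norm_eq_of_mem_sphere ω,
      Real.norm_of_nonneg (le_of_lt r.2), mul_one]
    ring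
  rw [h_punct, h_sphere_prod]
  simp only [h_homogeneous]
  rw [integral_prod_mul (f := fun ω : Metric.sphere (0 : 𝔼 n) 1 => ⟪v, (ω : 𝔼 n)⟫ ^ k)
      (g := fun r : Ioi (0 : ℝ) => (r : ℝ) ^ k * exp (-(r : ℝ) ^ 2)),
    integral_volumeIoiPow (g := fun r => r ^ k * exp (-r ^ 2))]
  simp_rw [← mul_assoc, ← pow_add, integral_Ioi_pow_mul_exp_neg_sq]
  rw [Nat.cast_add, Nat.cast_pred (Nat.pos_of_neZero n)]
  ring_nf

lemma integral_toSphere_inner_pow_mul_Gamma [NeZero n] {v : 𝔼 n} (hv : ‖v‖ = 1) (k : ℕ) :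
    (∫ ω : Metric.sphere (0 : 𝔼 n) 1, ⟪v, (ω : 𝔼 n)⟫ ^ k ∂(volume : Measure (𝔼 n)).toSphere) *
        (Gamma ((k + n) / 2) / 2) =
      (∫ t : ℝ, t ^ k * exp (-t ^ 2)) * (∫ t : ℝ, exp (-t ^ 2)) ^ (n - 1) := by
  rw [← integral_inner_pow_mul_exp_neg_norm_sq_eq_toSphere,
    integral_inner_norm_eq_of_norm_eq (w := EuclideanSpace.single 0 1) (by simp [hv])
      (fun a r => a ^ k * exp (-r ^ 2)), ← integral_coord_pow_mul_exp_neg_norm_sq 0]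
  simp [EuclideanSpace.inner_single_left]

lemma integral_toSphere_inner_pow_add_two [NeZero n] {v : 𝔼 n} (hv : ‖v‖ = 1) (k : ℕ) :
    ∫ ω : Metric.sphere (0 : 𝔼 n) 1, ⟪v, (ω : 𝔼 n)⟫ ^ (k + 2) ∂(volume : Measure (𝔼 n)).toSphere =
      (k + 1) / (n + k) *
        ∫ ω : Metric.sphere (0 : 𝔼 n) 1, ⟪v, (ω : 𝔼 n)⟫ ^ k ∂(volume : Measure (𝔼 n)).toSphere := by
  have hn : (0 : ℝ) < n := by exact_mod_cast Nat.pos_of_neZero n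
  have h := integral_toSphere_inner_pow_mul_Gamma hv (k + 2)
  rw [integral_pow_add_two_mul_exp_neg_sq, mul_assoc,
    ← integral_toSphere_inner_pow_mul_Gamma hv k, Nat.cast_add, Nat.cast_two,
    show ((k : ℝ) + 2 + n) / 2 = (k + n) / 2 + 1 by ring, Gamma_add_one (by positivity)] at h
  field_simp at h ⊢
  linarith

noncomputable def sphereMoment (n : ℕ) : ℕ → ℝ
  | 0 => 1
  | 1 => 0
  | k + 2 => (k + 1) / (n + k) * sphereMoment n k

theorem integral_inner_pow_normSphereMeasure [NeZero n] {v : 𝔼 n} (hv : ‖v‖ = 1) (k : ℕ) :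
    ∫ ω, ⟪v, (ω : 𝔼 n)⟫ ^ k ∂normSphereMeasure n = sphereMoment n k := by
  set c : ℕ → ℝ := fun k => ∫ ω : Metric.sphere (0 : 𝔼 n) 1, ⟪v, (ω : 𝔼 n)⟫ ^ k
    ∂(volume : Measure (𝔼 n)).toSphere with hc_def
  have hc : ∀ k : ℕ, c k * (Gamma ((k + n) / 2) / 2) =
      (∫ t : ℝ, t ^ k * exp (-t ^ 2)) * (∫ t : ℝ, exp (-t ^ 2)) ^ (n - 1) :=
    integral_toSphere_inner_pow_mul_Gamma hv
  have hc0 : c 0 ≠ 0 := by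
    have hG0 : 0 < ∫ t : ℝ, exp (-t ^ 2) := by
      have := integral_pow_mul_exp_neg_sq_of_even (k := 0) Even.zero
      simp only [pow_zero, one_mul, Nat.cast_zero, zero_add] at this
      exact this ▸ Gamma_pos_of_pos one_half_pos
    intro h0
    have := hc 0
    simp only [h0, zero_mul, pow_zero, one_mul] at this
    exact (mul_pos hG0 (pow_pos hG0 _)).ne this
  have hc1 : c 1 = 0 := by
    have := hc 1
    rw [integral_pow_mul_exp_neg_sq_of_odd odd_one, zero_mul, Nat.cast_one] at this
    exact (mul_eq_zero.mp this).resolve_right (by positivity)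
  have h_normalize : ∀ k, ∫ ω, ⟪v, (ω : 𝔼 n)⟫ ^ k ∂normSphereMeasure n = c k / c 0 := by
    intro k
    have : c 0 = (volume : Measure (𝔼 n)).toSphere.real univ := by simp [hc_def]
    rw [normSphereMeasure, integral_smul_measure, ENNReal.toReal_inv, smul_eq_mul, this,
      measureReal_def, div_eq_inv_mul]
  rw [h_normalize]
  induction k using Nat.twoStepInduction with
  | zero => simp [hc0, sphereMoment]
  | one => simp [hc1, sphereMoment]
  | more k ih _ =>
    have : c (k + 2) = (k + 1) / (n + k) * c k := integral_toSphere_inner_pow_add_two hv k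
    rw [this, mul_div_assoc, ih, sphereMoment]

end SphereMoments

lemma exists_mvPolynomial_eval_eq_inner_pow {n : ℕ} (x : 𝔼 n) (k : ℕ) :
    ∃ p : MvPolynomial (Fin n) ℝ, p.totalDegree ≤ k ∧
      ∀ z : 𝔼 n, MvPolynomial.eval (fun i => z i) p = ⟪x, z⟫ ^ k := by
  refine ⟨(∑ i, MvPolynomial.C (x i) * MvPolynomial.X i) ^ k, ?_, fun z => ?_⟩
  · have h_linear :
        (∑ i, MvPolynomial.C (x i) * MvPolynomial.X i : MvPolynomial (Fin n) ℝ).totalDegree ≤ 1 :=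
      (MvPolynomial.totalDegree_finsetSum _ _).trans <| Finset.sup_le fun i _ =>
        (MvPolynomial.totalDegree_mul _ _).trans (by simp)
    exact (MvPolynomial.totalDegree_pow _ _).trans (by simpa using Nat.mul_le_mul_left k h_linear)
  · simp [PiLp.inner_apply, mul_comm]

namespace IsSphericalDesign

variable {n τ : ℕ} [NeZero n] {C : Finset (𝔼 n)}

lemma average_inner_pow (hC : IsSphericalDesign n τ C) {x : 𝔼 n} (hx : ‖x‖ = 1) {k : ℕ}
    (hk : k ≤ τ) :
    1 / (C.card : ℝ) * ∑ y ∈ C, ⟪x, y⟫ ^ k = sphereMoment n k := by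
  obtain ⟨p, hp_deg, hp_eval⟩ := exists_mvPolynomial_eval_eq_inner_pow x k
  have := hC p (hp_deg.trans hk)
  simp only [hp_eval] at this
  rw [this, integral_inner_pow_normSphereMeasure hx]

lemma card_ne_zero (hC : IsSphericalDesign n τ C) : C.card ≠ 0 := by
  intro h
  have := hC.average_inner_pow (x := EuclideanSpace.single 0 1) (by simp) (Nat.zero_le τ)
  simp [h, sphereMoment] at this

lemma sum_inner_pow (hC : IsSphericalDesign n τ C) {x : 𝔼 n} (hx : ‖x‖ = 1) {k : ℕ}
    (hk : k ≤ τ) :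
    ∑ y ∈ C, ⟪x, y⟫ ^ k = C.card * sphereMoment n k := by
  rw [← hC.average_inner_pow hx hk, ← mul_assoc,
    mul_one_div_cancel (by exact_mod_cast hC.card_ne_zero), one_mul]

end IsSphericalDesign

noncomputable def exceptionalInnerProducts : Finset ℝ :=
  {-1, -1/2, 1/2, -1/3, 1/3, -1/6, 1/6, 0}

noncomputable def t2Certificate (t : ℝ) : ℝ :=
  (t + 1) * (t ^ 2 - 1/4) * (t ^ 2 - 1/9) * t ^ 2 * (t ^ 2 - 1/36) ^ 2

lemma sq_le_or_le_sq_of_notMem_T2 {t : ℝ} (ht : t ∉ T2) : t ^ 2 ≤ 1/9 ∨ 1/4 ≤ t ^ 2 := by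
  simp only [T2, Set.mem_union, Set.mem_Ioo, not_or, not_and_or, not_lt] at ht
  rcases ht with ⟨h₁ | h₁, h₂ | h₂⟩
  · right; nlinarith
  · right; nlinarith
  · left; nlinarith
  · right; nlinarith

lemma t2Certificate_nonneg {t : ℝ} (h₁ : -1 ≤ t) (h₂ : t ∉ T2) : 0 ≤ t2Certificate t := by
  have h_middle : 0 ≤ (t ^ 2 - 1/4) * (t ^ 2 - 1/9) := by
    rcases sq_le_or_le_sq_of_notMem_T2 h₂ with h | h
    · exact mul_nonneg_of_nonpos_of_nonpos (by linarith) (by linarith)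
    · exact mul_nonneg (by linarith) (by linarith)
  have h_eq : t2Certificate t =
      (t + 1) * ((t ^ 2 - 1/4) * (t ^ 2 - 1/9)) * (t * (t ^ 2 - 1/36)) ^ 2 := by
    unfold t2Certificate
    ring
  rw [h_eq]
  exact mul_nonneg (mul_nonneg (by linarith) h_middle) (sq_nonneg _)

lemma mem_exceptionalInnerProducts_of_t2Certificate_eq_zero {t : ℝ} (h : t2Certificate t = 0) :
    t ∈ exceptionalInnerProducts := by
  have h_eq : t2Certificate t = (t + 1) * (t + 1/2) * (t - 1/2) * (t + 1/3) * (t - 1/3) *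
      (t + 1/6) ^ 2 * (t - 1/6) ^ 2 * t ^ 2 := by
    unfold t2Certificate
    ring
  simp only [h_eq, mul_eq_zero, pow_eq_zero_iff two_ne_zero, sub_eq_zero, add_eq_zero_iff_eq_neg,
    or_assoc] at h
  rcases h with h | h | h | h | h | h | h | h <;> subst h <;> norm_num [exceptionalInnerProducts]

lemma t2Certificate_eq_sum_monomials (t : ℝ) : t2Certificate t =
    t ^ 2 / 46656 + t ^ 3 / 46656 - 85 * t ^ 4 / 46656 - 85 * t ^ 5 / 46656 + 7 * t ^ 6 / 144 +
      7 * t ^ 7 / 144 - 5 * t ^ 8 / 12 - 5 * t ^ 9 / 12 + t ^ 10 + t ^ 11 := by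
  unfold t2Certificate
  ring

lemma IsSphericalDesign.sum_t2Certificate {C : Finset (𝔼 48)} (hC : IsSphericalDesign 48 11 C)
    {x : 𝔼 48} (hx : ‖x‖ = 1) :
    ∑ y ∈ C, t2Certificate ⟪x, y⟫ = C.card * (7 / 291133440) := by
  have h_moments : ∀ k ≤ 11, ∑ y ∈ C, ⟪x, y⟫ ^ k = C.card * sphereMoment 48 k :=
    fun k hk => hC.sum_inner_pow hx hk
  simp only [t2Certificate_eq_sum_monomials, Finset.sum_add_distrib, Finset.sum_sub_distrib,
    ← Finset.sum_div, ← Finset.mul_sum, h_moments, Nat.reduceLeDiff]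
  norm_num [sphereMoment]
  ring

section T2AvoidingDesign

variable {C : Finset (𝔼 48)} {x : 𝔼 48}

lemma sum_erase_t2Certificate (hCsphere : ∀ x ∈ C, ‖x‖ = 1)
    (hCdesign : IsSphericalDesign 48 11 C) (hx : x ∈ C) :
    ∑ y ∈ C.erase x, t2Certificate ⟪x, y⟫ = (C.card - 52416000) * (7 / 291133440) := by
  have h := hCdesign.sum_t2Certificate (hCsphere x hx)
  rw [← Finset.add_sum_erase C _ hx, real_inner_self_eq_norm_sq, hCsphere x hx,
    show t2Certificate (1 ^ 2) = 1225 / 972 by norm_num [t2Certificate]] at h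
  linarith

lemma t2Certificate_inner_nonneg (hCsphere : ∀ x ∈ C, ‖x‖ = 1)
    (hCavoid : ∀ x ∈ C, ∀ y ∈ C, x ≠ y → ⟪x, y⟫ ∉ T2) (hx : x ∈ C) :
    ∀ y ∈ C.erase x, 0 ≤ t2Certificate ⟪x, y⟫ := by
  intro y hy
  obtain ⟨hyx, hyC⟩ := Finset.mem_erase.mp hy
  exact t2Certificate_nonneg
    (neg_one_le_real_inner_of_norm_eq_one (hCsphere x hx) (hCsphere y hyC))
    (hCavoid x hx y hyC (Ne.symm hyx))

lemma le_card_of_T2_avoiding (hCsphere : ∀ x ∈ C, ‖x‖ = 1)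
    (hCavoid : ∀ x ∈ C, ∀ y ∈ C, x ≠ y → ⟪x, y⟫ ∉ T2) (hCdesign : IsSphericalDesign 48 11 C) :
    52416000 ≤ C.card := by
  obtain ⟨x, hx⟩ := Finset.card_pos.mp (Nat.pos_of_ne_zero hCdesign.card_ne_zero)
  have h := Finset.sum_nonneg (t2Certificate_inner_nonneg hCsphere hCavoid hx)
  rw [sum_erase_t2Certificate hCsphere hCdesign hx] at h
  exact_mod_cast (by linarith : (52416000 : ℝ) ≤ C.card)

lemma inner_mem_exceptionalInnerProducts (hCsphere : ∀ x ∈ C, ‖x‖ = 1)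
    (hCavoid : ∀ x ∈ C, ∀ y ∈ C, x ≠ y → ⟪x, y⟫ ∉ T2) (hCdesign : IsSphericalDesign 48 11 C)
    (hcard : C.card = 52416000) (hx : x ∈ C) :
    ∀ y ∈ C.erase x, ⟪x, y⟫ ∈ exceptionalInnerProducts := by
  have h_sum := sum_erase_t2Certificate hCsphere hCdesign hx
  rw [hcard, Nat.cast_ofNat, sub_self, zero_mul,
    Finset.sum_eq_zero_iff_of_nonneg (t2Certificate_inner_nonneg hCsphere hCavoid hx)] at h_sum
  exact fun y hy => mem_exceptionalInnerProducts_of_t2Certificate_eq_zero (h_sum y hy)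

lemma sum_card_filter_inner_eq_mul_pow (hCsphere : ∀ x ∈ C, ‖x‖ = 1)
    (hCavoid : ∀ x ∈ C, ∀ y ∈ C, x ≠ y → ⟪x, y⟫ ∉ T2) (hCdesign : IsSphericalDesign 48 11 C)
    (hcard : C.card = 52416000) (hx : x ∈ C) {k : ℕ} (hk : k ≤ 11) :
    ∑ s ∈ exceptionalInnerProducts, (#{y ∈ C | ⟪x, y⟫ = s} : ℝ) * s ^ k =
      52416000 * sphereMoment 48 k - 1 := by
  have h_self : ⟪x, x⟫ = 1 := by rw [real_inner_self_eq_norm_sq, hCsphere x hx, one_pow]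
  have h_fiber : ∀ s ∈ exceptionalInnerProducts,
      {y ∈ C.erase x | ⟪x, y⟫ = s} = {y ∈ C | ⟪x, y⟫ = s} := by
    intro s hs
    refine (Finset.filter_erase _ _ _).trans (Finset.erase_eq_of_notMem fun h => ?_)
    rw [Finset.mem_filter, h_self] at h
    rw [← h.2] at hs
    norm_num [exceptionalInnerProducts] at hs
  have h_sum := hCdesign.sum_inner_pow (hCsphere x hx) hk
  rw [← Finset.add_sum_erase C _ hx, h_self, one_pow, hcard,
    ← Finset.sum_fiberwise_of_maps_to'
      (inner_mem_exceptionalInnerProducts hCsphere hCavoid hCdesign hcard hx) (· ^ k)] at h_sum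
  simp only [Finset.sum_const, nsmul_eq_mul] at h_sum
  rw [Finset.sum_congr rfl fun s hs => by rw [h_fiber s hs]] at h_sum
  push_cast at h_sum
  linarith

lemma card_filter_inner_eq_of_card_eq (hCsphere : ∀ x ∈ C, ‖x‖ = 1)
    (hCavoid : ∀ x ∈ C, ∀ y ∈ C, x ≠ y → ⟪x, y⟫ ∉ T2) (hCdesign : IsSphericalDesign 48 11 C)
    (hcard : C.card = 52416000) (hx : x ∈ C) :
    #{y ∈ C | ⟪x, y⟫ = -1} = 1 ∧
    #{y ∈ C | ⟪x, y⟫ = -1/2} = 36848 ∧ #{y ∈ C | ⟪x, y⟫ = 1/2} = 36848 ∧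
    #{y ∈ C | ⟪x, y⟫ = -1/3} = 1678887 ∧ #{y ∈ C | ⟪x, y⟫ = 1/3} = 1678887 ∧
    #{y ∈ C | ⟪x, y⟫ = -1/6} = 12608784 ∧ #{y ∈ C | ⟪x, y⟫ = 1/6} = 12608784 ∧
    #{y ∈ C | ⟪x, y⟫ = 0} = 23766960 := by
  set N : ℝ → ℝ := fun s => #{y ∈ C | ⟪x, y⟫ = s} with hN
  have h_moment k (hk : k ≤ 11) :
      ∑ s ∈ exceptionalInnerProducts, N s * s ^ k = 52416000 * sphereMoment 48 k - 1 :=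
    sum_card_filter_inner_eq_mul_pow hCsphere hCavoid hCdesign hcard hx hk
  have h0 := h_moment 0 (by norm_num)
  have h1 := h_moment 1 (by norm_num)
  have h2 := h_moment 2 (by norm_num)
  have h3 := h_moment 3 (by norm_num)
  have h4 := h_moment 4 (by norm_num)
  have h5 := h_moment 5 (by norm_num)
  have h6 := h_moment 6 (by norm_num)
  have h7 := h_moment 7 (by norm_num)
  simp only [exceptionalInnerProducts] at h0 h1 h2 h3 h4 h5 h6 h7
  norm_num [Finset.sum_insert, sphereMoment] at h0 h1 h2 h3 h4 h5 h6 h7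
  have h_solution : N (-1) = 1 ∧ N (-1/2) = 36848 ∧ N (1/2) = 36848 ∧ N (-1/3) = 1678887 ∧
      N (1/3) = 1678887 ∧ N (-1/6) = 12608784 ∧ N (1/6) = 12608784 ∧ N 0 = 23766960 := by
    norm_num
    refine ⟨?_, ?_, ?_, ?_, ?_, ?_, ?_, ?_⟩ <;> linarith
  simp only [hN] at h_solution
  exact_mod_cast h_solution

lemma hasExceptionalDistanceDistribution_of_card_eq (hCsphere : ∀ x ∈ C, ‖x‖ = 1)
    (hCavoid : ∀ x ∈ C, ∀ y ∈ C, x ≠ y → ⟪x, y⟫ ∉ T2) (hCdesign : IsSphericalDesign 48 11 C)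
    (hcard : C.card = 52416000) : HasExceptionalDistanceDistribution C := by
  intro x hx
  obtain ⟨h₁, h₂, h₃, h₄, h₅, h₆, h₇, h₈⟩ :=
    card_filter_inner_eq_of_card_eq hCsphere hCavoid hCdesign hcard hx
  refine ⟨h₁, h₂, h₃, h₄, h₅, h₆, h₇, h₈, fun t ht htS => ?_⟩
  refine Finset.card_eq_zero.mpr (Finset.filter_eq_empty_iff.mpr fun y hy hxy => ?_)
  by_cases hyx : y = x
  · rw [hyx, real_inner_self_eq_norm_sq, hCsphere x hx, one_pow] at hxy
    exact ht.ne hxy.symm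
  · have := inner_mem_exceptionalInnerProducts hCsphere hCavoid hCdesign hcard hx y
      (Finset.mem_erase.mpr ⟨hyx, hy⟩)
    rw [hxy] at this
    exact htS (by simpa [exceptionalInnerProducts] using this)

lemma isAntipodal_of_card_eq (hCsphere : ∀ x ∈ C, ‖x‖ = 1)
    (hCavoid : ∀ x ∈ C, ∀ y ∈ C, x ≠ y → ⟪x, y⟫ ∉ T2) (hCdesign : IsSphericalDesign 48 11 C)
    (hcard : C.card = 52416000) : IsAntipodal C := by
  intro x hx
  have h_one := (card_filter_inner_eq_of_card_eq hCsphere hCavoid hCdesign hcard hx).1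
  obtain ⟨y, hy⟩ := Finset.card_pos.mp (h_one ▸ Nat.one_pos)
  obtain ⟨hyC, hxy⟩ := Finset.mem_filter.mp hy
  rwa [(inner_eq_neg_one_iff_of_norm_eq_one (hCsphere x hx) (hCsphere y hyC)).mp hxy, neg_neg]

end T2AvoidingDesign

theorem min_cardinality_T2_designs (C : Finset (EuclideanSpace ℝ (Fin 48)))
    (hCsphere : ∀ x ∈ C, ‖x‖ = 1)
    (hCavoid : ∀ x ∈ C, ∀ y ∈ C, x ≠ y → (inner ℝ x y : ℝ) ∉ T2)
    (hCdesign : IsSphericalDesign 48 11 C) :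
    52416000 ≤ C.card ∧
      (C.card = 52416000 →
        (∀ x ∈ C, ∀ y ∈ C, x ≠ y → (inner ℝ x y : ℝ) ≤ 1/2) ∧
        IsAntipodal C ∧ HasExceptionalDistanceDistribution C) := by
  refine ⟨le_card_of_T2_avoiding hCsphere hCavoid hCdesign, fun hcard => ⟨?_,
    isAntipodal_of_card_eq hCsphere hCavoid hCdesign hcard,
    hasExceptionalDistanceDistribution_of_card_eq hCsphere hCavoid hCdesign hcard⟩⟩
  intro x hx y hy hxy
  have := inner_mem_exceptionalInnerProducts hCsphere hCavoid hCdesign hcard hx y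
    (Finset.mem_erase.mpr ⟨hxy.symm, hy⟩)
  simp only [exceptionalInnerProducts, Finset.mem_insert, Finset.mem_singleton] at this
  rcases this with h | h | h | h | h | h | h | h <;> rw [h] <;> norm_num
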